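/- For any partitioned order μ of [n] arising from the integer partition i, the sequence φ(μ) has length lcm(i) and all of its blocks are pairwise distinct; consequently the orbit of φ(μ) under circular shifts has exactly lcm(i) elements. -/

import Mathlib

/-- A partitioned order of `[n]`: a set of pairwise disjoint nonempty lists
of distinct elements of `[n]` whose union is `[n]`. -/
structure PartitionedOrder (n : ℕ) where
  oblocks : Finset (List (Fin n))
  nonempty : ∀ S ∈ oblocks, S ≠ []
  nodup : ∀ S ∈ oblocks, S.Nodup
  disjoint : ∀ S ∈ oblocks, ∀ T ∈ oblocks, S ≠ T → ∀ x, x ∈ S → x ∉ T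
  cover : ∀ x : Fin n, ∃ S ∈ oblocks, x ∈ S

namespace PartitionedOrder

variable {n : ℕ}

/-- The block `W_ℓ = { S_k[ℓ mod n_k] : k }` of the sequential rewriting. -/
def phiBlock (μ : PartitionedOrder n) (ℓ : ℕ) : Finset (Fin n) :=
  μ.oblocks.attach.image (fun S =>
    S.1.get ⟨ℓ % S.1.length,
      Nat.mod_lt _ (List.length_pos_iff.mpr (μ.nonempty S.1 S.2))⟩)

/-- The period `p` of a partitioned order: the lcm of its o-block lengths. -/
def period (μ : PartitionedOrder n) : ℕ := μ.oblocks.lcm List.length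

/-- The sequential rewriting `φ(μ) = (W_0, …, W_{p-1})`. -/
def phi (μ : PartitionedOrder n) : List (Finset (Fin n)) :=
  (List.range μ.period).map μ.phiBlock

end PartitionedOrder

/-- An ordered partition of `[n]` (block-sequential update mode): a sequence of
nonempty pairwise disjoint subsets of `[n]` whose union is `[n]`. -/
def IsOrderedPartition {n : ℕ} (L : List (Finset (Fin n))) : Prop :=
  (∀ W ∈ L, W.Nonempty) ∧ L.Pairwise Disjoint ∧ ∀ x : Fin n, ∃ W ∈ L, x ∈ W

/-!
Each o-block `S` of `μ` contributes exactly one element, `S[ℓ mod |S|]`, to `W_ℓ`, and the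
o-blocks are disjoint, so `W_ℓ` determines `ℓ mod |S|` for every `S`, hence `ℓ` modulo the
lcm `p` of the lengths. Thus `W_0, …, W_{p-1}` are pairwise distinct, and a duplicate-free
list of length `p` has exactly `p` distinct rotations.
-/

theorem Nat.ModEq.finset_lcm {ι : Type*} {s : Finset ι} {f : ι → ℕ} {a b : ℕ}
    (h : ∀ i ∈ s, a ≡ b [MOD f i]) : a ≡ b [MOD s.lcm f] := by
  wlog hab : a ≤ b generalizing a b
  · exact (this (fun i hi => (h i hi).symm) (le_of_not_ge hab)).symm
  exact (Nat.modEq_iff_dvd' hab).mpr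
    (Finset.lcm_dvd fun i hi => (Nat.modEq_iff_dvd' hab).mp (h i hi))

theorem List.Nodup.card_rotations {α : Type*} {l : List α} (hl : l.Nodup) (hne : l ≠ []) :
    Nat.card {L : List α // ∃ k, L = l.rotate k} = l.length := by
  classical
  have hmem : ∀ L, (∃ k, L = l.rotate k) ↔ L ∈ l.cyclicPermutations.toFinset := by
    intro L
    rw [List.mem_toFinset, List.mem_cyclicPermutations_iff, List.isRotated_comm]
    exact exists_congr fun _ => eq_comm
  rw [Nat.card_congr (Equiv.subtypeEquivRight hmem), Nat.card_eq_fintype_card,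
    Fintype.card_coe, List.toFinset_card_of_nodup hl.cyclicPermutations,
    List.length_cyclicPermutations_of_ne_nil l hne]

namespace PartitionedOrder

variable {n : ℕ} (μ : PartitionedOrder n)

theorem period_pos : 0 < μ.period := by
  refine Nat.pos_of_ne_zero fun h => ?_
  obtain ⟨S, hS, hlen⟩ := Finset.lcm_eq_zero_iff.mp h
  exact μ.nonempty S hS (List.length_eq_zero_iff.mp hlen)

@[simp]
theorem length_phi : μ.phi.length = μ.period := by
  simp [phi]

theorem phi_ne_nil : μ.phi ≠ [] :=
  List.ne_nil_of_length_pos (μ.length_phi ▸ μ.period_pos)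

theorem mem_phiBlock {ℓ : ℕ} {x : Fin n} :
    x ∈ μ.phiBlock ℓ ↔ ∃ S, ∃ hS : S ∈ μ.oblocks,
      S.get ⟨ℓ % S.length, Nat.mod_lt _ (List.length_pos_iff.mpr (μ.nonempty S hS))⟩ = x := by
  simp [phiBlock]

theorem modEq_length_of_phiBlock_eq {a b : ℕ} (h : μ.phiBlock a = μ.phiBlock b)
    {S : List (Fin n)} (hS : S ∈ μ.oblocks) : a ≡ b [MOD S.length] := by
  obtain ⟨T, hT, hTS⟩ := (μ.mem_phiBlock).mp (h ▸ (μ.mem_phiBlock).mpr ⟨S, hS, rfl⟩)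
  have hTS_eq : T = S := by
    by_contra hne
    exact μ.disjoint S hS T hT (Ne.symm hne) _ (List.get_mem _ _) (hTS ▸ List.get_mem _ _)
  subst hTS_eq
  exact (congrArg Fin.val ((List.nodup_iff_injective_get.mp (μ.nodup T hT)) hTS)).symm

theorem phiBlock_injOn : Set.InjOn μ.phiBlock (Set.Iio μ.period) := fun _ ha _ hb h =>
  (Nat.ModEq.finset_lcm fun _ hS => μ.modEq_length_of_phiBlock_eq h hS).eq_of_lt_of_lt ha hb

theorem nodup_phi : μ.phi.Nodup :=
  List.nodup_range.map_on fun _ ha _ hb h =>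
    μ.phiBlock_injOn (List.mem_range.mp ha) (List.mem_range.mp hb) h

end PartitionedOrder

/-- `φ(μ)` has length `lcm(i)` (the lcm of the o-block lengths),
all of its blocks are pairwise distinct, and consequently its orbit under
circular shifts has exactly `lcm(i)` elements. -/
theorem phi_length_nodup_orbit {n : ℕ} (μ : PartitionedOrder n) :
    μ.phi.length = μ.period ∧ μ.phi.Nodup ∧
    Nat.card {L : List (Finset (Fin n)) // ∃ k, L = μ.phi.rotate k} =
      μ.period :=
  ⟨μ.length_phi, μ.nodup_phi, by rw [μ.nodup_phi.card_rotations μ.phi_ne_nil, μ.length_phi]⟩
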